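/- Lyapunov property of the Bregman divergence along the discrete Hessian–Riemannian flow: suppose each g_{i,j} is continuously differentiable and convex on ℝ⁴ and f : (0,∞) → ℝ is strictly increasing. Let Y* ∈ M_h satisfy F_h(Y*) = 0, and let Y : [0,S) → M_h be differentiable and satisfy the HRF equations on [0,S). Then for every s ∈ [0,S), (d/ds) D_E(Y*, Y(s)) = −⟨F_h(Y(s)) − F_h(Y*), Y(s) − Y*⟩_{h,Δt} ≤ 0; in particular, s ↦ D_E(Y*, Y(s)) is nonincreasing on [0,S). -/

import Mathlib

open scoped BigOperators

/-- Grid functions on the periodic `N × N` grid `(ℤ/Nℤ)²`. -/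
abbrev Grid (N : ℕ) : Type := ZMod N → ZMod N → ℝ

/-- Mesh size `h = 1/N`. -/
noncomputable def gridh (N : ℕ) : ℝ := 1 / N

/-- Discrete pairing `⟨a,b⟩_h = h² ∑_{i,j} a_{ij} b_{ij}`. -/
noncomputable def pairh (N : ℕ) [NeZero N] (a b : Grid N) : ℝ :=
  gridh N ^ 2 * ∑ i : ZMod N, ∑ j : ZMod N, a i j * b i j

/-- One-sided difference `(D₁⁺ y)_{ij} = (y_{i+1,j} - y_{ij}) / h`. -/
noncomputable def D1p (N : ℕ) (y : Grid N) : Grid N := fun i j => (y (i + 1) j - y i j) / gridh N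

/-- One-sided difference `(D₁⁻ y)_{ij} = (y_{ij} - y_{i-1,j}) / h`. -/
noncomputable def D1m (N : ℕ) (y : Grid N) : Grid N := fun i j => (y i j - y (i - 1) j) / gridh N

/-- One-sided difference `(D₂⁺ y)_{ij} = (y_{i,j+1} - y_{ij}) / h`. -/
noncomputable def D2p (N : ℕ) (y : Grid N) : Grid N := fun i j => (y i (j + 1) - y i j) / gridh N

/-- One-sided difference `(D₂⁻ y)_{ij} = (y_{ij} - y_{i,j-1}) / h`. -/
noncomputable def D2m (N : ℕ) (y : Grid N) : Grid N := fun i j => (y i j - y i (j - 1)) / gridh N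

/-- Five-point discrete Laplacian. -/
noncomputable def lapFD (N : ℕ) (y : Grid N) : Grid N :=
  fun i j => -(4 * y i j - y (i + 1) j - y (i - 1) j - y i (j + 1) - y i (j - 1)) / gridh N ^ 2

/-- Upwind stencil `[D_h y]_{ij} ∈ ℝ⁴`. -/
noncomputable def DHs (N : ℕ) (y : Grid N) (i j : ZMod N) : Fin 4 → ℝ :=
  ![D1p N y i j, D1m N y i j, D2p N y i j, D2m N y i j]

/-- `α^{(ℓ)}(U)_{ij} = (∂g_{ij}/∂q_ℓ)([D_h U]_{ij})`. -/
noncomputable def alphaFD (N : ℕ) (g : ZMod N → ZMod N → (Fin 4 → ℝ) → ℝ)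
    (U : Grid N) (l : Fin 4) : Grid N :=
  fun i j => fderiv ℝ (g i j) (DHs N U i j) (Pi.single l 1)

/-- Discrete transport operator `B_h(U, M)`. -/
noncomputable def Bh (N : ℕ) (g : ZMod N → ZMod N → (Fin 4 → ℝ) → ℝ) (U M : Grid N) : Grid N :=
  fun i j =>
    -D1m N (fun a b => M a b * alphaFD N g U 0 a b) i j
      - D1p N (fun a b => M a b * alphaFD N g U 1 a b) i j
      - D2m N (fun a b => M a b * alphaFD N g U 2 a b) i j
      - D2p N (fun a b => M a b * alphaFD N g U 3 a b) i j

/-- HJB residual block `r_k`. -/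
noncomputable def rkFD (N : ℕ) (g : ZMod N → ZMod N → (Fin 4 → ℝ) → ℝ) (f : ℝ → ℝ)
    (Vh : Grid N) (ν Δt : ℝ) (M U : ℕ → Grid N) (k : ℕ) : Grid N :=
  fun i j => (U k i j - U (k - 1) i j) / Δt + ν * lapFD N (U (k - 1)) i j
    - g i j (DHs N (U (k - 1)) i j) + f (M k i j) + Vh i j

/-- Fokker–Planck residual block `s_k`. -/
noncomputable def skFD (N : ℕ) (g : ZMod N → ZMod N → (Fin 4 → ℝ) → ℝ)
    (ν Δt : ℝ) (M U : ℕ → Grid N) (k : ℕ) : Grid N :=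
  fun i j => (M k i j - M (k - 1) i j) / Δt - ν * lapFD N (M k) i j
    + Bh N g (U (k - 1)) (M k) i j

/-- `r̄_k = ⟨M_k, r_k⟩_h / ⟨M_k, 1⟩_h`. -/
noncomputable def rbarFD (N : ℕ) [NeZero N] (g : ZMod N → ZMod N → (Fin 4 → ℝ) → ℝ) (f : ℝ → ℝ)
    (Vh : Grid N) (ν Δt : ℝ) (M U : ℕ → Grid N) (k : ℕ) : ℝ :=
  pairh N (M k) (rkFD N g f Vh ν Δt M U k) / pairh N (M k) (fun _ _ => 1)

/-- Entropy functional `E(Y)`. -/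
noncomputable def entE (N : ℕ) [NeZero N] (NT : ℕ) (Δt : ℝ) (M U : ℕ → Grid N) : ℝ :=
  Δt * ∑ k ∈ Finset.Icc 1 NT, pairh N (M k) (fun i j => Real.log (M k i j) - 1)
    + Δt / 2 * ∑ k ∈ Finset.range NT, pairh N (U k) (U k)

/-- Bregman divergence of the entropy, `D_E(Y*, Y)`. -/
noncomputable def DE (N : ℕ) [NeZero N] (NT : ℕ) (Δt : ℝ) (M' U' M U : ℕ → Grid N) : ℝ :=
  entE N NT Δt M' U' - entE N NT Δt M U
    - (Δt * ∑ k ∈ Finset.Icc 1 NT,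
        pairh N (fun i j => Real.log (M k i j)) (fun i j => M' k i j - M k i j)
      + Δt * ∑ k ∈ Finset.range NT, pairh N (U k) (fun i j => U' k i j - U k i j))

/-- The Hessian–Riemannian flow equations on a set `D` of artificial times. -/
def IsHRFOn (N : ℕ) [NeZero N] (NT : ℕ) (g : ZMod N → ZMod N → (Fin 4 → ℝ) → ℝ)
    (f : ℝ → ℝ) (Vh : Grid N) (ν Δt : ℝ)
    (Ms Us : ℝ → ℕ → Grid N) (D : Set ℝ) : Prop :=
  ∀ s ∈ D, ∀ k ∈ Finset.Icc 1 NT,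
    (∀ i j, HasDerivWithinAt (fun t => Ms t k i j)
      (-(Ms s k i j) * (rkFD N g f Vh ν Δt (Ms s) (Us s) k i j
        - rbarFD N g f Vh ν Δt (Ms s) (Us s) k)) D s) ∧
    (∀ i j, HasDerivWithinAt (fun t => Us t (k - 1) i j)
      (-(skFD N g ν Δt (Ms s) (Us s) k i j)) D s)

/-! Along the flow, `d/ds D_E(Y*, Y(s)) = ⟨∇²E(Y) Y', Y - Y*⟩_{h,Δt}`. The entropy Hessian `1/M_k`
cancels the factor `M_k` of the flow, mass conservation removes the mean `r̄_k`, and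
`F_h(Y*) = 0`, so the derivative is `-⟨F_h(Y) - F_h(Y*), Y - Y*⟩_{h,Δt}`. This pairing is
nonnegative because `F_h` is monotone: summation by parts makes the two viscosity terms cancel and
turns the transport terms into first-order Taylor remainders of the convex `g_{i,j}`, weighted by
the densities; the discrete time derivatives telescope to boundary terms that vanish because `M₀`
and `U_{N_T}` are fixed; and `f` is increasing. -/

open Finset

lemma ContinuousLinearMap.apply_eq_sum_mul_single {ι : Type*} [Fintype ι] [DecidableEq ι]
    (L : (ι → ℝ) →L[ℝ] ℝ) (v : ι → ℝ) : L v = ∑ l, v l * L (Pi.single l 1) := by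
  conv_lhs => rw [pi_eq_sum_univ' v]
  simp only [map_sum, map_smul, smul_eq_mul]

lemma ConvexOn.add_fderiv_sub_le {E : Type*} [NormedAddCommGroup E] [NormedSpace ℝ E]
    {s : Set E} {φ : E → ℝ} (hφ : ConvexOn ℝ s φ) {p q : E} (hp : p ∈ s) (hq : q ∈ s)
    (hdiff : DifferentiableAt ℝ φ q) : φ q + fderiv ℝ φ q (p - q) ≤ φ p := by
  have hline : ConvexOn ℝ (AffineMap.lineMap q p ⁻¹' s) (fun t : ℝ => φ (q + t • (p - q))) := by
    refine (hφ.comp_affineMap (AffineMap.lineMap q p)).congr fun t _ => ?_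
    simp only [Function.comp_apply, AffineMap.lineMap_apply_module]
    congr 1
    module
  have hderiv : HasDerivAt (fun t : ℝ => φ (q + t • (p - q))) (fderiv ℝ φ q (p - q)) 0 := by
    have hpath : HasDerivAt (fun t : ℝ => q + t • (p - q)) (p - q) 0 := by
      simpa using ((hasDerivAt_id (0 : ℝ)).smul_const (p - q)).const_add q
    have hφq : HasFDerivAt φ (fderiv ℝ φ q) (q + (0 : ℝ) • (p - q)) := by
      simpa using hdiff.hasFDerivAt
    exact hφq.comp_hasDerivAt 0 hpath
  have := hline.le_slope_of_hasDerivAt (by simpa using hq) (by simpa using hp) one_pos hderiv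
  simp only [slope_def_field, one_smul, zero_smul, add_zero, add_sub_cancel, sub_zero,
    div_one] at this
  linarith

lemma ConvexOn.sub_mul_sub_le_fderiv {E : Type*} [NormedAddCommGroup E] [NormedSpace ℝ E]
    {s : Set E} {φ : E → ℝ} (hφ : ConvexOn ℝ s φ) {p q : E} (hp : p ∈ s) (hq : q ∈ s)
    (hpdiff : DifferentiableAt ℝ φ p) (hqdiff : DifferentiableAt ℝ φ q) {m n : ℝ} (hm : 0 ≤ m)
    (hn : 0 ≤ n) :
    (φ p - φ q) * (m - n) ≤ m * fderiv ℝ φ p (p - q) - n * fderiv ℝ φ q (p - q) := by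
  have hpq := mul_le_mul_of_nonneg_left (hφ.add_fderiv_sub_le hq hp hpdiff) hm
  have hqp := mul_le_mul_of_nonneg_left (hφ.add_fderiv_sub_le hp hq hqdiff) hn
  rw [← neg_sub p q, map_neg] at hpq
  linarith

lemma Finset.sum_Icc_one_eq_sum_range {M : Type*} [AddCommMonoid M] (F : ℕ → M) (n : ℕ) :
    ∑ k ∈ Icc 1 n, F k = ∑ k ∈ range n, F (k + 1) := by
  induction n with
  | zero => simp
  | succ n ih => rw [sum_Icc_succ_top (by omega), ih, sum_range_succ]

lemma Finset.sum_Icc_one_sub_pred {G : Type*} [AddCommGroup G] (P : ℕ → G) (n : ℕ) :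
    ∑ k ∈ Icc 1 n, (P k - P (k - 1)) = P n - P 0 := by
  rw [sum_Icc_one_eq_sum_range]
  exact sum_range_sub P n

section Operators

variable {N : ℕ}

lemma lapFD_eq_D1p_D1m_add_D2p_D2m (y : Grid N) :
    lapFD N y = D1p N (D1m N y) + D2p N (D2m N y) := by
  funext i j
  simp only [lapFD, D1p, D1m, D2p, D2m, Pi.add_apply, add_sub_cancel_right]
  field_simp
  ring

lemma lapFD_sub (a b : Grid N) : lapFD N (a - b) = lapFD N a - lapFD N b := by
  funext i j
  simp only [lapFD, Pi.sub_apply]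
  ring

lemma DHs_sub (a b : Grid N) (i j : ZMod N) : DHs N (a - b) i j = DHs N a i j - DHs N b i j := by
  funext l
  fin_cases l <;>
    simp only [DHs, D1p, D1m, D2p, D2m, Pi.sub_apply, Fin.zero_eta, Fin.mk_one, Fin.reduceFinMk,
      Matrix.cons_val] <;> ring

variable (g : ZMod N → ZMod N → (Fin 4 → ℝ) → ℝ) (f : ℝ → ℝ) (Vh : Grid N) (ν Δt : ℝ)
  (M U M' U' : ℕ → Grid N) (k : ℕ)

lemma rkFD_sub_rkFD :
    rkFD N g f Vh ν Δt M U k - rkFD N g f Vh ν Δt M' U' k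
      = Δt⁻¹ • ((U k - U' k) - (U (k - 1) - U' (k - 1))) + ν • lapFD N (U (k - 1) - U' (k - 1))
        - (fun i j => g i j (DHs N (U (k - 1)) i j) - g i j (DHs N (U' (k - 1)) i j))
        + (fun i j => f (M k i j) - f (M' k i j)) := by
  funext i j
  simp only [rkFD, lapFD_sub, Pi.add_apply, Pi.sub_apply, Pi.smul_apply, smul_eq_mul]
  ring

lemma skFD_sub_skFD :
    skFD N g ν Δt M U k - skFD N g ν Δt M' U' k
      = Δt⁻¹ • ((M k - M' k) - (M (k - 1) - M' (k - 1))) - ν • lapFD N (M k - M' k)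
        + (Bh N g (U (k - 1)) (M k) - Bh N g (U' (k - 1)) (M' k)) := by
  funext i j
  simp only [skFD, lapFD_sub, Pi.add_apply, Pi.sub_apply, Pi.smul_apply, smul_eq_mul]
  ring

end Operators

section Pairing

variable {N : ℕ} [NeZero N]

lemma pairh_comm (a b : Grid N) : pairh N a b = pairh N b a := by
  simp only [pairh, mul_comm (a _ _)]

lemma pairh_add_left (a b c : Grid N) : pairh N (a + b) c = pairh N a c + pairh N b c := by
  simp only [pairh, Pi.add_apply, add_mul, sum_add_distrib, mul_add]

lemma pairh_sub_left (a b c : Grid N) : pairh N (a - b) c = pairh N a c - pairh N b c := by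
  simp only [pairh, Pi.sub_apply, sub_mul, sum_sub_distrib, mul_sub]

lemma pairh_neg_left (a b : Grid N) : pairh N (-a) b = -pairh N a b := by
  simp only [pairh, Pi.neg_apply, neg_mul, sum_neg_distrib, mul_neg]

lemma pairh_smul_left (c : ℝ) (a b : Grid N) : pairh N (c • a) b = c * pairh N a b := by
  simp only [pairh, Pi.smul_apply, smul_eq_mul, mul_assoc, ← mul_sum]
  ring

lemma pairh_sub_const_left (a b : Grid N) (c : ℝ) :
    pairh N (fun i j => a i j - c) b = pairh N a b - c * pairh N b (fun _ _ => 1) := by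
  simp only [pairh, sub_mul, sum_sub_distrib, mul_sub, mul_one, ← mul_sum]
  ring

lemma pairh_nonneg {a b : Grid N} (h : ∀ i j, 0 ≤ a i j * b i j) : 0 ≤ pairh N a b :=
  mul_nonneg (sq_nonneg _) (sum_nonneg fun i _ => sum_nonneg fun j _ => h i j)

lemma pairh_D1m (a b : Grid N) : pairh N (D1m N a) b = -pairh N a (D1p N b) := by
  have shift : ∑ i, ∑ j, a (i - 1) j * b i j = ∑ i, ∑ j, a i j * b (i + 1) j :=
    Fintype.sum_equiv (Equiv.subRight 1) _ _ fun i => by simp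
  simp only [pairh, D1m, D1p, div_eq_inv_mul, mul_assoc, mul_left_comm (a _ _), ← mul_sum,
    sub_mul, mul_sub, sum_sub_distrib, shift]
  ring

lemma pairh_D2m (a b : Grid N) : pairh N (D2m N a) b = -pairh N a (D2p N b) := by
  have shift : ∑ i, ∑ j, a i (j - 1) * b i j = ∑ i, ∑ j, a i j * b i (j + 1) :=
    sum_congr rfl fun i _ => Fintype.sum_equiv (Equiv.subRight 1) _ _ fun j => by simp
  simp only [pairh, D2m, D2p, div_eq_inv_mul, mul_assoc, mul_left_comm (a _ _), ← mul_sum,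
    sub_mul, mul_sub, sum_sub_distrib, shift]
  ring

lemma pairh_D1p (a b : Grid N) : pairh N (D1p N a) b = -pairh N a (D1m N b) := by
  rw [pairh_comm a, pairh_D1m, pairh_comm, neg_neg]

lemma pairh_D2p (a b : Grid N) : pairh N (D2p N a) b = -pairh N a (D2m N b) := by
  rw [pairh_comm a, pairh_D2m, pairh_comm, neg_neg]

lemma pairh_lapFD (a b : Grid N) :
    pairh N (lapFD N a) b = -(pairh N (D1m N a) (D1m N b) + pairh N (D2m N a) (D2m N b)) := by
  rw [lapFD_eq_D1p_D1m_add_D2p_D2m, pairh_add_left, pairh_D1p, pairh_D2p]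
  ring

lemma pairh_lapFD_comm (a b : Grid N) : pairh N (lapFD N a) b = pairh N a (lapFD N b) := by
  rw [pairh_lapFD, pairh_comm a, pairh_lapFD, pairh_comm (D1m N b), pairh_comm (D2m N b)]

lemma pairh_Bh (g : ZMod N → ZMod N → (Fin 4 → ℝ) → ℝ) (U M W : Grid N) :
    pairh N (Bh N g U M) W
      = pairh N M (fun i j => fderiv ℝ (g i j) (DHs N U i j) (DHs N W i j)) := by
  have hB : Bh N g U M = -D1m N (M * alphaFD N g U 0) - D1p N (M * alphaFD N g U 1)
      - D2m N (M * alphaFD N g U 2) - D2p N (M * alphaFD N g U 3) := rfl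
  simp only [hB, pairh_sub_left, pairh_neg_left, pairh_D1m, pairh_D1p, pairh_D2m, pairh_D2p]
  simp only [pairh, neg_neg, sub_neg_eq_add, ← mul_add, ← sum_add_distrib]
  congr 1
  refine sum_congr rfl fun i _ => sum_congr rfl fun j _ => ?_
  rw [ContinuousLinearMap.apply_eq_sum_mul_single, Fin.sum_univ_four]
  simp only [DHs, alphaFD, Pi.mul_apply, Matrix.cons_val]
  ring

lemma pairh_hamiltonian_le_pairh_Bh {g : ZMod N → ZMod N → (Fin 4 → ℝ) → ℝ}
    (hconv : ∀ i j, ConvexOn ℝ Set.univ (g i j)) (hdiff : ∀ i j, Differentiable ℝ (g i j))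
    {U U' M M' : Grid N} (hM : ∀ i j, 0 ≤ M i j) (hM' : ∀ i j, 0 ≤ M' i j) :
    pairh N (fun i j => g i j (DHs N U i j) - g i j (DHs N U' i j)) (M - M')
      ≤ pairh N (Bh N g U M - Bh N g U' M') (U - U') := by
  rw [pairh_sub_left, pairh_Bh, pairh_Bh]
  simp only [pairh, DHs_sub, ← mul_sub, ← sum_sub_distrib]
  gcongr with i _ j _
  exact (hconv i j).sub_mul_sub_le_fderiv (Set.mem_univ _) (Set.mem_univ _) ((hdiff i j) _)
    ((hdiff i j) _) (hM i j) (hM' i j)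

lemma pairh_sub_mul_sub_nonneg {f : ℝ → ℝ} (hf : MonotoneOn f (Set.Ioi 0)) {M M' : Grid N}
    (hM : ∀ i j, 0 < M i j) (hM' : ∀ i j, 0 < M' i j) :
    0 ≤ pairh N (fun i j => f (M i j) - f (M' i j)) (M - M') :=
  pairh_nonneg fun i j => (monovaryOn_id_iff.2 hf).sub_mul_sub_nonneg (hM' i j) (hM i j)

lemma pairh_residual_sub_eq (g : ZMod N → ZMod N → (Fin 4 → ℝ) → ℝ) (f : ℝ → ℝ) (Vh : Grid N)
    (ν Δt : ℝ) (M U M' U' : ℕ → Grid N) (k : ℕ) :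
    pairh N (rkFD N g f Vh ν Δt M U k - rkFD N g f Vh ν Δt M' U' k) (M k - M' k)
      + pairh N (skFD N g ν Δt M U k - skFD N g ν Δt M' U' k) (U (k - 1) - U' (k - 1))
    = Δt⁻¹ * (pairh N (U k - U' k) (M k - M' k)
          - pairh N (U (k - 1) - U' (k - 1)) (M (k - 1) - M' (k - 1)))
      + (pairh N (Bh N g (U (k - 1)) (M k) - Bh N g (U' (k - 1)) (M' k)) (U (k - 1) - U' (k - 1))
        - pairh N (fun i j => g i j (DHs N (U (k - 1)) i j) - g i j (DHs N (U' (k - 1)) i j))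
            (M k - M' k))
      + pairh N (fun i j => f (M k i j) - f (M' k i j)) (M k - M' k) := by
  rw [rkFD_sub_rkFD, skFD_sub_skFD]
  -- the `set`s keep `pairh_sub_left` from splitting the differences in the second argument
  set δU := U (k - 1) - U' (k - 1)
  set δM := M k - M' k
  set δU₁ := U k - U' k
  set δM₀ := M (k - 1) - M' (k - 1)
  simp only [pairh_add_left, pairh_sub_left, pairh_smul_left]
  rw [pairh_lapFD_comm, pairh_comm δU (lapFD N δM), pairh_comm δM δU, pairh_comm δM₀ δU]
  ring

lemma hasDerivWithinAt_pairh_left {F : ℝ → Grid N} {F' : Grid N} (b : Grid N) {D : Set ℝ}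
    {s : ℝ} (hF : ∀ i j, HasDerivWithinAt (fun t => F t i j) (F' i j) D s) :
    HasDerivWithinAt (fun t => pairh N (F t) b) (pairh N F' b) D s :=
  (HasDerivWithinAt.fun_sum fun i _ => HasDerivWithinAt.fun_sum fun j _ =>
    (hF i j).mul_const (b i j)).const_mul _

end Pairing

section Bregman

variable {N : ℕ} [NeZero N]

/-- `D_E` integrates the nodewise Bregman divergences of `x ↦ x log x - x` and `u ↦ u² / 2`. -/
lemma DE_eq_sum (NT : ℕ) (Δt : ℝ) (M' U' M U : ℕ → Grid N) :
    DE N NT Δt M' U' M U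
      = Δt * ∑ k ∈ Icc 1 NT, pairh N (fun i j => M' k i j * Real.log (M' k i j)
            - M' k i j * Real.log (M k i j) + M k i j - M' k i j) (fun _ _ => 1)
        + Δt * ∑ k ∈ range NT,
            pairh N (fun i j => (U' k i j - U k i j) ^ 2 / 2) (fun _ _ => 1) := by
  have hM : ∀ k, pairh N (fun i j => M' k i j * Real.log (M' k i j)
        - M' k i j * Real.log (M k i j) + M k i j - M' k i j) (fun _ _ => 1)
      = pairh N (M' k) (fun i j => Real.log (M' k i j) - 1)
        - pairh N (M k) (fun i j => Real.log (M k i j) - 1)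
        - pairh N (fun i j => Real.log (M k i j)) (fun i j => M' k i j - M k i j) := fun k => by
    simp only [pairh, ← mul_sub, ← sum_sub_distrib]
    congr 1
    exact sum_congr rfl fun i _ => sum_congr rfl fun j _ => by ring
  have hU : ∀ k, pairh N (fun i j => (U' k i j - U k i j) ^ 2 / 2) (fun _ _ => 1)
      = pairh N (U' k) (U' k) / 2 - pairh N (U k) (U k) / 2
        - pairh N (U k) (fun i j => U' k i j - U k i j) := fun k => by
    simp only [pairh, mul_div_assoc, ← mul_sub, sum_div, ← sum_sub_distrib]
    congr 1
    exact sum_congr rfl fun i _ => sum_congr rfl fun j _ => by ring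
  simp only [DE, entE, hM, hU, sum_sub_distrib, ← sum_div]
  ring

lemma pairh_neg_mul_sub_const_div_self {M M' : Grid N} (hpos : ∀ i j, 0 < M i j)
    (hmass : pairh N M (fun _ _ => 1) = pairh N M' (fun _ _ => 1)) (r : Grid N) (c : ℝ) :
    pairh N (fun i j => -M i j * (r i j - c) / M i j) (M - M') = -pairh N r (M - M') := by
  have hnode : (fun i j => -M i j * (r i j - c) / M i j) = -fun i j => r i j - c := by
    funext i j
    rw [Pi.neg_apply, Pi.neg_apply, neg_mul, neg_div, mul_div_cancel_left₀ _ (hpos i j).ne']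
  rw [hnode, pairh_neg_left, pairh_sub_const_left, pairh_sub_left, hmass, sub_self, mul_zero,
    sub_zero]

lemma hasDerivWithinAt_DE {NT : ℕ} {Δt : ℝ} {M' U' : ℕ → Grid N} {Ms Us : ℝ → ℕ → Grid N}
    {dM dU : ℕ → Grid N} {D : Set ℝ} {s : ℝ} (hpos : ∀ k ∈ Icc 1 NT, ∀ i j, 0 < Ms s k i j)
    (hM : ∀ k ∈ Icc 1 NT, ∀ i j, HasDerivWithinAt (fun t => Ms t k i j) (dM k i j) D s)
    (hU : ∀ k ∈ range NT, ∀ i j, HasDerivWithinAt (fun t => Us t k i j) (dU k i j) D s) :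
    HasDerivWithinAt (fun t => DE N NT Δt M' U' (Ms t) (Us t))
      (Δt * ∑ k ∈ Icc 1 NT, pairh N (fun i j => dM k i j / Ms s k i j) (Ms s k - M' k)
        + Δt * ∑ k ∈ range NT, pairh N (dU k) (Us s k - U' k)) D s := by
  simp only [DE_eq_sum]
  have hMnode : ∀ k ∈ Icc 1 NT, ∀ i j, HasDerivWithinAt
      (fun t => M' k i j * Real.log (M' k i j) - M' k i j * Real.log (Ms t k i j)
        + Ms t k i j - M' k i j)
      (dM k i j / Ms s k i j * (Ms s k i j - M' k i j) * 1) D s := fun k hk i j => by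
    have hne := (hpos k hk i j).ne'
    refine (((((hM k hk i j).log hne).const_mul (M' k i j)).const_sub _).fun_add
      (hM k hk i j)).sub_const (M' k i j) |>.congr_deriv ?_
    field_simp
    ring
  have hUnode : ∀ k ∈ range NT, ∀ i j, HasDerivWithinAt
      (fun t => (U' k i j - Us t k i j) ^ 2 / 2) (dU k i j * (Us s k i j - U' k i j) * 1) D s :=
    fun k hk i j => by
      refine (((hU k hk i j).const_sub (U' k i j)).fun_pow 2).div_const 2 |>.congr_deriv ?_
      push_cast
      ring
  refine (((HasDerivWithinAt.fun_sum fun k hk =>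
    hasDerivWithinAt_pairh_left _ (hMnode k hk)).const_mul Δt).fun_add
    ((HasDerivWithinAt.fun_sum fun k hk =>
      hasDerivWithinAt_pairh_left _ (hUnode k hk)).const_mul Δt)).congr_deriv ?_
  simp only [pairh, mul_one, Pi.sub_apply]

end Bregman

/-- `⟨F_h(Y) - F_h(Y'), Y - Y'⟩_{h,Δt}`: the block `r_k` is paired with `M_k`, the block `s_k`
with `U_{k-1}`. -/
noncomputable def residualPairing (N : ℕ) [NeZero N] (NT : ℕ)
    (g : ZMod N → ZMod N → (Fin 4 → ℝ) → ℝ) (f : ℝ → ℝ) (Vh : Grid N) (ν Δt : ℝ)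
    (M U M' U' : ℕ → Grid N) : ℝ :=
  Δt * ∑ k ∈ Icc 1 NT,
      pairh N (rkFD N g f Vh ν Δt M U k - rkFD N g f Vh ν Δt M' U' k) (M k - M' k)
    + Δt * ∑ k ∈ Icc 1 NT,
      pairh N (skFD N g ν Δt M U k - skFD N g ν Δt M' U' k) (U (k - 1) - U' (k - 1))

section Lyapunov

variable {N : ℕ} [NeZero N] {NT : ℕ} {g : ZMod N → ZMod N → (Fin 4 → ℝ) → ℝ} {f : ℝ → ℝ}
  {Vh : Grid N} {ν Δt : ℝ}

lemma residualPairing_nonneg (hΔt : 0 ≤ Δt) (hconv : ∀ i j, ConvexOn ℝ Set.univ (g i j))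
    (hdiff : ∀ i j, Differentiable ℝ (g i j)) (hf : MonotoneOn f (Set.Ioi 0))
    {M U M' U' : ℕ → Grid N} (hM : ∀ k ∈ Icc 1 NT, ∀ i j, 0 < M k i j)
    (hM' : ∀ k ∈ Icc 1 NT, ∀ i j, 0 < M' k i j) (hinit : M 0 = M' 0) (hterm : U NT = U' NT) :
    0 ≤ residualPairing N NT g f Vh ν Δt M U M' U' := by
  set P : ℕ → ℝ := fun k => pairh N (U k - U' k) (M k - M' k)
  have hstep : ∀ k ∈ Icc 1 NT, Δt⁻¹ * (P k - P (k - 1))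
      ≤ pairh N (rkFD N g f Vh ν Δt M U k - rkFD N g f Vh ν Δt M' U' k) (M k - M' k)
        + pairh N (skFD N g ν Δt M U k - skFD N g ν Δt M' U' k) (U (k - 1) - U' (k - 1)) :=
    fun k hk => by
      have hH := pairh_hamiltonian_le_pairh_Bh hconv hdiff (U := U (k - 1)) (U' := U' (k - 1))
        (fun i j => (hM k hk i j).le) (fun i j => (hM' k hk i j).le)
      have hF := pairh_sub_mul_sub_nonneg hf (hM k hk) (hM' k hk)
      rw [pairh_residual_sub_eq]
      linarith
  have htelescope : ∑ k ∈ Icc 1 NT, Δt⁻¹ * (P k - P (k - 1)) = 0 := by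
    simp only [← mul_sum, sum_Icc_one_sub_pred, P, hinit, hterm, sub_self]
    simp [pairh]
  rw [residualPairing, ← mul_add, ← sum_add_distrib]
  exact mul_nonneg hΔt (htelescope ▸ sum_le_sum hstep)

lemma hasDerivWithinAt_DE_of_isHRFOn {M' U' : ℕ → Grid N} {Ms Us : ℝ → ℕ → Grid N}
    {D : Set ℝ} {s : ℝ} (hflow : IsHRFOn N NT g f Vh ν Δt Ms Us D) (hs : s ∈ D)
    (hpos : ∀ k ∈ Icc 1 NT, ∀ i j, 0 < Ms s k i j)
    (hmass : ∀ k ∈ Icc 1 NT, pairh N (Ms s k) (fun _ _ => 1) = pairh N (M' k) (fun _ _ => 1))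
    (hr' : ∀ k ∈ Icc 1 NT, rkFD N g f Vh ν Δt M' U' k = 0)
    (hs' : ∀ k ∈ Icc 1 NT, skFD N g ν Δt M' U' k = 0) :
    HasDerivWithinAt (fun t => DE N NT Δt M' U' (Ms t) (Us t))
      (-residualPairing N NT g f Vh ν Δt (Ms s) (Us s) M' U') D s := by
  refine (hasDerivWithinAt_DE
    (dM := fun k i j => -Ms s k i j * (rkFD N g f Vh ν Δt (Ms s) (Us s) k i j
      - rbarFD N g f Vh ν Δt (Ms s) (Us s) k))
    (dU := fun k i j => -skFD N g ν Δt (Ms s) (Us s) (k + 1) i j)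
    hpos (fun k hk => (hflow s hs k hk).1) fun k hk i j => ?_).congr_deriv ?_
  · have hk' : k + 1 ∈ Icc 1 NT := by simp only [mem_range, mem_Icc] at hk ⊢; omega
    simpa using (hflow s hs (k + 1) hk').2 i j
  have hMk : ∀ k ∈ Icc 1 NT,
      pairh N (fun i j => -Ms s k i j * (rkFD N g f Vh ν Δt (Ms s) (Us s) k i j
        - rbarFD N g f Vh ν Δt (Ms s) (Us s) k) / Ms s k i j) (Ms s k - M' k)
      = -pairh N (rkFD N g f Vh ν Δt (Ms s) (Us s) k - rkFD N g f Vh ν Δt M' U' k)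
          (Ms s k - M' k) := fun k hk => by
    rw [pairh_neg_mul_sub_const_div_self (hpos k hk) (hmass k hk), hr' k hk, sub_zero]
  have hUk : ∑ k ∈ range NT, pairh N (fun i j => -skFD N g ν Δt (Ms s) (Us s) (k + 1) i j)
        (Us s k - U' k)
      = -∑ k ∈ Icc 1 NT, pairh N (skFD N g ν Δt (Ms s) (Us s) k - skFD N g ν Δt M' U' k)
          (Us s (k - 1) - U' (k - 1)) := by
    rw [sum_Icc_one_eq_sum_range, ← sum_neg_distrib]
    refine sum_congr rfl fun k hk => ?_
    have hk' : k + 1 ∈ Icc 1 NT := by simp only [mem_range, mem_Icc] at hk ⊢; omega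
    rw [hs' _ hk', sub_zero, Nat.add_sub_cancel, ← pairh_neg_left]
    rfl
  rw [sum_congr rfl hMk, hUk, residualPairing, sum_neg_distrib]
  ring

end Lyapunov

theorem hrf_bregman_lyapunov_general (N : ℕ) [NeZero N] (NT : ℕ)
    (Δt ν : ℝ) (hΔt : 0 < Δt)
    (g : ZMod N → ZMod N → (Fin 4 → ℝ) → ℝ)
    (hg1 : ∀ i j, ContDiff ℝ 1 (g i j))
    (hg2 : ∀ i j, ConvexOn ℝ Set.univ (g i j))
    (f : ℝ → ℝ) (hf : StrictMonoOn f (Set.Ioi 0))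
    (Vh : Grid N)
    (Mstar Ustar : ℕ → Grid N)
    (hstar_feas : ∀ k ∈ Finset.Icc 1 NT,
      (∀ i j, 0 < Mstar k i j) ∧ pairh N (Mstar k) (fun _ _ => 1) = 1)
    (hstar_eq : ∀ k ∈ Finset.Icc 1 NT,
      rkFD N g f Vh ν Δt Mstar Ustar k = 0 ∧ skFD N g ν Δt Mstar Ustar k = 0)
    (S : ℝ)
    (Ms Us : ℝ → ℕ → Grid N)
    (hcurve_feas : ∀ s ∈ Set.Ico (0 : ℝ) S, ∀ k ∈ Finset.Icc 1 NT,
      (∀ i j, 0 < Ms s k i j) ∧ pairh N (Ms s k) (fun _ _ => 1) = 1)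
    (hcurve_end : ∀ s ∈ Set.Ico (0 : ℝ) S, Ms s 0 = Mstar 0 ∧ Us s NT = Ustar NT)
    (hflow : IsHRFOn N NT g f Vh ν Δt Ms Us (Set.Ico 0 S)) :
    (∀ s ∈ Set.Ico (0 : ℝ) S,
      HasDerivWithinAt (fun t => DE N NT Δt Mstar Ustar (Ms t) (Us t))
        (-(Δt * ∑ k ∈ Finset.Icc 1 NT,
            pairh N (fun i j => rkFD N g f Vh ν Δt (Ms s) (Us s) k i j
                - rkFD N g f Vh ν Δt Mstar Ustar k i j)
              (fun i j => Ms s k i j - Mstar k i j)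
          + Δt * ∑ k ∈ Finset.Icc 1 NT,
            pairh N (fun i j => skFD N g ν Δt (Ms s) (Us s) k i j
                - skFD N g ν Δt Mstar Ustar k i j)
              (fun i j => Us s (k - 1) i j - Ustar (k - 1) i j)))
        (Set.Ico 0 S) s ∧
      -(Δt * ∑ k ∈ Finset.Icc 1 NT,
            pairh N (fun i j => rkFD N g f Vh ν Δt (Ms s) (Us s) k i j
                - rkFD N g f Vh ν Δt Mstar Ustar k i j)
              (fun i j => Ms s k i j - Mstar k i j)
          + Δt * ∑ k ∈ Finset.Icc 1 NT,
            pairh N (fun i j => skFD N g ν Δt (Ms s) (Us s) k i j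
                - skFD N g ν Δt Mstar Ustar k i j)
              (fun i j => Us s (k - 1) i j - Ustar (k - 1) i j)) ≤ 0) ∧
    AntitoneOn (fun t => DE N NT Δt Mstar Ustar (Ms t) (Us t)) (Set.Ico 0 S) := by
  have hderiv : ∀ s ∈ Set.Ico (0 : ℝ) S, HasDerivWithinAt
      (fun t => DE N NT Δt Mstar Ustar (Ms t) (Us t))
      (-residualPairing N NT g f Vh ν Δt (Ms s) (Us s) Mstar Ustar) (Set.Ico 0 S) s :=
    fun s hs => hasDerivWithinAt_DE_of_isHRFOn hflow hs (fun k hk => (hcurve_feas s hs k hk).1)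
      (fun k hk => (hcurve_feas s hs k hk).2.trans (hstar_feas k hk).2.symm)
      (fun k hk => (hstar_eq k hk).1) (fun k hk => (hstar_eq k hk).2)
  have hnonpos : ∀ s ∈ Set.Ico (0 : ℝ) S,
      -residualPairing N NT g f Vh ν Δt (Ms s) (Us s) Mstar Ustar ≤ 0 :=
    fun s hs => neg_nonpos.2 <| residualPairing_nonneg hΔt.le hg2
      (fun i j => (hg1 i j).differentiable one_ne_zero) hf.monotoneOn
      (fun k hk => (hcurve_feas s hs k hk).1) (fun k hk => (hstar_feas k hk).1)
      (hcurve_end s hs).1 (hcurve_end s hs).2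
  exact ⟨fun s hs => ⟨hderiv s hs, hnonpos s hs⟩,
    antitoneOn_of_hasDerivWithinAt_nonpos (convex_Ico 0 S)
      (fun s hs => (hderiv s hs).continuousWithinAt)
      (fun s hs => (hderiv s (interior_subset hs)).mono interior_subset)
      (fun s hs => hnonpos s (interior_subset hs))⟩

/-- Lyapunov property of the Bregman divergence along the discrete HRF. -/
theorem hrf_bregman_lyapunov (N : ℕ) [NeZero N] (NT : ℕ) (hNT : 1 ≤ NT)
    (Δt ν : ℝ) (hΔt : 0 < Δt) (hν : 0 ≤ ν)
    (g : ZMod N → ZMod N → (Fin 4 → ℝ) → ℝ)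
    (hg1 : ∀ i j, ContDiff ℝ 1 (g i j))
    (hg2 : ∀ i j, ConvexOn ℝ Set.univ (g i j))
    (f : ℝ → ℝ) (hf : StrictMonoOn f (Set.Ioi 0))
    (Vh : Grid N)
    (Mstar Ustar : ℕ → Grid N)
    (hstar_feas : ∀ k ∈ Finset.Icc 1 NT,
      (∀ i j, 0 < Mstar k i j) ∧ pairh N (Mstar k) (fun _ _ => 1) = 1)
    (hstar_eq : ∀ k ∈ Finset.Icc 1 NT,
      rkFD N g f Vh ν Δt Mstar Ustar k = 0 ∧ skFD N g ν Δt Mstar Ustar k = 0)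
    (S : ℝ) (hS : 0 < S)
    (Ms Us : ℝ → ℕ → Grid N)
    (hcurve_feas : ∀ s ∈ Set.Ico (0 : ℝ) S, ∀ k ∈ Finset.Icc 1 NT,
      (∀ i j, 0 < Ms s k i j) ∧ pairh N (Ms s k) (fun _ _ => 1) = 1)
    (hcurve_end : ∀ s ∈ Set.Ico (0 : ℝ) S, Ms s 0 = Mstar 0 ∧ Us s NT = Ustar NT)
    (hflow : IsHRFOn N NT g f Vh ν Δt Ms Us (Set.Ico 0 S)) :
    (∀ s ∈ Set.Ico (0 : ℝ) S,
      HasDerivWithinAt (fun t => DE N NT Δt Mstar Ustar (Ms t) (Us t))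
        (-(Δt * ∑ k ∈ Finset.Icc 1 NT,
            pairh N (fun i j => rkFD N g f Vh ν Δt (Ms s) (Us s) k i j
                - rkFD N g f Vh ν Δt Mstar Ustar k i j)
              (fun i j => Ms s k i j - Mstar k i j)
          + Δt * ∑ k ∈ Finset.Icc 1 NT,
            pairh N (fun i j => skFD N g ν Δt (Ms s) (Us s) k i j
                - skFD N g ν Δt Mstar Ustar k i j)
              (fun i j => Us s (k - 1) i j - Ustar (k - 1) i j)))
        (Set.Ico 0 S) s ∧
      -(Δt * ∑ k ∈ Finset.Icc 1 NT,
            pairh N (fun i j => rkFD N g f Vh ν Δt (Ms s) (Us s) k i j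
                - rkFD N g f Vh ν Δt Mstar Ustar k i j)
              (fun i j => Ms s k i j - Mstar k i j)
          + Δt * ∑ k ∈ Finset.Icc 1 NT,
            pairh N (fun i j => skFD N g ν Δt (Ms s) (Us s) k i j
                - skFD N g ν Δt Mstar Ustar k i j)
              (fun i j => Us s (k - 1) i j - Ustar (k - 1) i j)) ≤ 0) ∧
    AntitoneOn (fun t => DE N NT Δt Mstar Ustar (Ms t) (Us t)) (Set.Ico 0 S) :=
  hrf_bregman_lyapunov_general N NT Δt ν hΔt g hg1 hg2 f hf Vh Mstar Ustar hstar_feas hstar_eq S Ms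
    Us hcurve_feas hcurve_end hflow
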